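/- (Theorem 4.4) Let γ : ℝ → ℝ⁴ be smooth and let U₁, U₂, U₃, U₄ : ℝ → ℝ⁴ be smooth maps forming, at every σ, a linearly independent family, with continuous functions 𝒦̄₁, 𝒦̄₂, 𝒦̄₃ : ℝ → ℝ, such that γ' = U₁ and the timelike equiform Frenet equations hold: U₁' = 𝒦̄₁U₁ + U₂, U₂' = U₁ + 𝒦̄₁U₂ + 𝒦̄₂U₃, U₃' = -𝒦̄₂U₂ + 𝒦̄₁U₃ + 𝒦̄₃U₄, U₄' = -𝒦̄₃U₃ + 𝒦̄₁U₄. Assume 𝒦̄₁(σ) ≠ 0 for all σ. Then 𝒦̄₂ ≡ 0 if and only if γ lies fully in a 2-dimensional plane of E₁⁴, i.e. there exists a 2-dimensional linear subspace W ⊆ ℝ⁴ such that γ(σ) - γ(0) ∈ W for all σ. -/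

import Mathlib

noncomputable section

/-- The Minkowski bilinear form on ℝ⁴ with signature (-,+,+,+). -/
def B (x y : Fin 4 → ℝ) : ℝ :=
  -(x 0 * y 0) + x 1 * y 1 + x 2 * y 2 + x 3 * y 3

/-!
If `𝒦̄₂ ≡ 0`, the first two Frenet equations decouple in `U₁ ± U₂`, which solve the
scalar linear equations `V' = (𝒦̄₁ ± 1) V`; each is therefore a multiple of its initial
value, so `γ' = U₁` stays in the plane spanned by `U₁(0)` and `U₂(0)`. Conversely, if
`γ - γ(0)` stays in a plane `W`, then differentiating and using the Frenet equations puts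
`U₁`, `U₂` and `𝒦̄₂ U₃` in `W`, and `U₃(σ) ∉ W` by linear independence.
-/

open Module Submodule

section Calculus

variable {E : Type*} [NormedAddCommGroup E] [NormedSpace ℝ E]

theorem eq_exp_integral_smul_of_hasDerivAt [CompleteSpace E] {a : ℝ → ℝ} {v : ℝ → E}
    (ha : Continuous a) (hv : ∀ t, HasDerivAt v (a t • v t) t) (t : ℝ) :
    v t = Real.exp (∫ s in (0)..t, a s) • v 0 := by
  set A : ℝ → ℝ := fun t => ∫ s in (0)..t, a s
  have hA : ∀ t, HasDerivAt A (a t) t := fun t => (ha.integral_hasStrictDerivAt 0 t).hasDerivAt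
  have hconst : ∀ t, HasDerivAt (fun t => Real.exp (-A t) • v t) 0 t := by
    intro t
    refine ((hA t).neg.exp.smul (hv t)).congr_deriv ?_
    rw [smul_smul, ← add_smul]
    simp
  have h := is_const_of_deriv_eq_zero (fun t => (hconst t).differentiableAt)
    (fun t => (hconst t).deriv) t 0
  simp only [A, intervalIntegral.integral_same, neg_zero, Real.exp_zero, one_smul] at h
  rw [← h, smul_smul, ← Real.exp_add, add_neg_cancel, Real.exp_zero, one_smul]

theorem mem_span_pair_of_hasDerivAt [CompleteSpace E] {a : ℝ → ℝ} {u w : ℝ → E}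
    (ha : Continuous a) (hu : ∀ t, HasDerivAt u (a t • u t + w t) t)
    (hw : ∀ t, HasDerivAt w (u t + a t • w t) t) (t : ℝ) :
    u t ∈ span ℝ {u 0, w 0} := by
  have hsum : ∀ t, HasDerivAt (u + w) ((a t + 1) • (u + w) t) t := fun t => by
    convert (hu t).add (hw t) using 1
    simp only [Pi.add_apply]
    module
  have hdiff : ∀ t, HasDerivAt (u - w) ((a t - 1) • (u - w) t) t := fun t => by
    convert (hu t).sub (hw t) using 1
    simp only [Pi.sub_apply]
    module
  have h_add := eq_exp_integral_smul_of_hasDerivAt (ha.add continuous_const) hsum t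
  have h_sub := eq_exp_integral_smul_of_hasDerivAt (ha.sub continuous_const) hdiff t
  simp only [Pi.add_apply, Pi.sub_apply] at h_add h_sub
  set c_add := Real.exp (∫ s in (0)..t, a s + 1)
  set c_sub := Real.exp (∫ s in (0)..t, a s - 1)
  refine mem_span_pair.mpr ⟨(c_add + c_sub) / 2, (c_add - c_sub) / 2, ?_⟩
  have : u t = (1 / 2 : ℝ) • ((u t + w t) + (u t - w t)) := by module
  rw [this, h_add, h_sub]
  module

theorem Submodule.mem_of_hasDerivAt_of_sub_mem (W : Submodule ℝ E) [FiniteDimensional ℝ W]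
    {f : ℝ → E} {f' : E} {t : ℝ} (hf : HasDerivAt f f' t) (hW : ∀ s, f s - f t ∈ W) :
    f' ∈ W := by
  have hslope : ∀ s, slope f t s ∈ W := fun s => W.smul_mem _ (hW s)
  exact W.closed_of_finiteDimensional.mem_of_tendsto (hasDerivAt_iff_tendsto_slope.mp hf)
    (Filter.Eventually.of_forall hslope)

theorem Submodule.sub_mem_of_hasDerivAt_mem [FiniteDimensional ℝ E] (W : Submodule ℝ E)
    {f f' : ℝ → E} (hf : ∀ t, HasDerivAt f (f' t) t) (hf' : ∀ t, f' t ∈ W) (s t : ℝ) :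
    f t - f s ∈ W := by
  obtain ⟨W', hW'⟩ := W.exists_isCompl
  set Q : E →L[ℝ] E := (W'.subtype ∘ₗ projectionOnto W' W hW'.symm).toContinuousLinearMap
  have hQ : ∀ x, Q x = 0 ↔ x ∈ W := fun x => by
    change ((projectionOnto W' W hW'.symm x : W') : E) = 0 ↔ x ∈ W
    rw [ZeroMemClass.coe_eq_zero, ← LinearMap.mem_ker, ker_projectionOnto]
  have hQf : ∀ t, HasDerivAt (fun t => Q (f t)) 0 t := fun t => by
    have h := Q.hasFDerivAt.comp_hasDerivAt t (hf t)
    rwa [(hQ _).mpr (hf' t)] at h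
  rw [← hQ, map_sub, sub_eq_zero]
  exact is_const_of_deriv_eq_zero (fun t => (hQf t).differentiableAt) (fun t => (hQf t).deriv) t s

end Calculus

theorem LinearIndependent.card_le_finrank_of_forall_mem {K E ι : Type*} [DivisionRing K]
    [AddCommGroup E] [Module K E] {v : ι → E} (hv : LinearIndependent K v)
    (W : Submodule K E) [FiniteDimensional K W] {s : Finset ι} (hs : ∀ i ∈ s, v i ∈ W) :
    s.card ≤ finrank K W := by
  have hvs : LinearIndependent K (W.subtype ∘ fun i : s => (⟨v i, hs i i.2⟩ : W)) :=
    hv.comp _ Subtype.val_injective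
  simpa using (LinearIndependent.of_comp _ hvs).fintype_card_le_finrank

theorem timelike_K₂_zero_iff_planar_general
    (γ U₁ U₂ U₃ U₄ : ℝ → Fin 4 → ℝ) (K₁ K₂ : ℝ → ℝ)
    (hγ : ContDiff ℝ (⊤ : ℕ∞) γ)
    (hU₁ : ContDiff ℝ (⊤ : ℕ∞) U₁) (hU₂ : ContDiff ℝ (⊤ : ℕ∞) U₂)
    (hindep : ∀ σ, LinearIndependent ℝ ![U₁ σ, U₂ σ, U₃ σ, U₄ σ])
    (hK₁c : Continuous K₁)
    (hγ' : ∀ σ, deriv γ σ = U₁ σ)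
    (hU₁' : ∀ σ, deriv U₁ σ = K₁ σ • U₁ σ + U₂ σ)
    (hU₂' : ∀ σ, deriv U₂ σ = U₁ σ + K₁ σ • U₂ σ + K₂ σ • U₃ σ) :
    (∀ σ, K₂ σ = 0) ↔
      ∃ W : Submodule ℝ (Fin 4 → ℝ), Module.finrank ℝ W = 2 ∧
        ∀ σ, γ σ - γ 0 ∈ W := by
  have hasDerivAt_of_deriv_eq : ∀ {f g : ℝ → Fin 4 → ℝ}, ContDiff ℝ (⊤ : ℕ∞) f →
      (∀ σ, deriv f σ = g σ) → ∀ σ, HasDerivAt f (g σ) σ :=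
    fun hf hd σ => hd σ ▸ (hf.differentiable (by simp) σ).hasDerivAt
  have dγ := hasDerivAt_of_deriv_eq hγ hγ'
  have dU₁ := hasDerivAt_of_deriv_eq hU₁ hU₁'
  have dU₂ := hasDerivAt_of_deriv_eq hU₂ hU₂'
  constructor
  · intro hK₂
    refine ⟨span ℝ {U₁ 0, U₂ 0}, le_antisymm ?_ ?_, fun σ => ?_⟩
    · classical
      exact (finrank_span_le_card _).trans (by simpa using Finset.card_le_two)
    · simpa using (hindep 0).card_le_finrank_of_forall_mem _ (s := {0, 1})
        (by simp [mem_span_of_mem])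
    · have hU₁W : ∀ t, U₁ t ∈ span ℝ {U₁ 0, U₂ 0} :=
        mem_span_pair_of_hasDerivAt hK₁c dU₁ fun t => by simpa [hK₂] using dU₂ t
      exact sub_mem_of_hasDerivAt_mem _ dγ hU₁W 0 σ
  · rintro ⟨W, hW, hγW⟩
    by_contra! ⟨σ, hσ⟩
    have hU₁W : ∀ t, U₁ t ∈ W := fun t =>
      W.mem_of_hasDerivAt_of_sub_mem (dγ t) fun s => by simpa using W.sub_mem (hγW s) (hγW t)
    have hU₂W : ∀ t, U₂ t ∈ W := fun t => by
      have h := W.mem_of_hasDerivAt_of_sub_mem (dU₁ t) fun s => W.sub_mem (hU₁W s) (hU₁W t)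
      simpa using W.sub_mem h (W.smul_mem (K₁ t) (hU₁W t))
    have hU₃W : U₃ σ ∈ W := by
      have h := W.mem_of_hasDerivAt_of_sub_mem (dU₂ σ) fun s => W.sub_mem (hU₂W s) (hU₂W σ)
      refine (W.smul_mem_iff hσ).mp ?_
      simpa using W.sub_mem h (W.add_mem (hU₁W σ) (W.smul_mem (K₁ σ) (hU₂W σ)))
    have h3 := (hindep σ).card_le_finrank_of_forall_mem W (s := {0, 1, 2})
      (by simp [hU₁W σ, hU₂W σ, hU₃W])
    simp [hW] at h3

theorem timelike_K₂_zero_iff_planar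
    (γ U₁ U₂ U₃ U₄ : ℝ → Fin 4 → ℝ) (K₁ K₂ K₃ : ℝ → ℝ)
    (hγ : ContDiff ℝ (⊤ : ℕ∞) γ)
    (hU₁ : ContDiff ℝ (⊤ : ℕ∞) U₁) (hU₂ : ContDiff ℝ (⊤ : ℕ∞) U₂)
    (hU₃ : ContDiff ℝ (⊤ : ℕ∞) U₃) (hU₄ : ContDiff ℝ (⊤ : ℕ∞) U₄)
    (hindep : ∀ σ, LinearIndependent ℝ ![U₁ σ, U₂ σ, U₃ σ, U₄ σ])
    (hK₁c : Continuous K₁) (hK₂c : Continuous K₂) (hK₃c : Continuous K₃)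
    (hγ' : ∀ σ, deriv γ σ = U₁ σ)
    (hU₁' : ∀ σ, deriv U₁ σ = K₁ σ • U₁ σ + U₂ σ)
    (hU₂' : ∀ σ, deriv U₂ σ = U₁ σ + K₁ σ • U₂ σ + K₂ σ • U₃ σ)
    (hU₃' : ∀ σ, deriv U₃ σ = -(K₂ σ • U₂ σ) + K₁ σ • U₃ σ + K₃ σ • U₄ σ)
    (hU₄' : ∀ σ, deriv U₄ σ = -(K₃ σ • U₃ σ) + K₁ σ • U₄ σ)
    (hK₁ne : ∀ σ, K₁ σ ≠ 0) :
    (∀ σ, K₂ σ = 0) ↔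
      ∃ W : Submodule ℝ (Fin 4 → ℝ), Module.finrank ℝ W = 2 ∧
        ∀ σ, γ σ - γ 0 ∈ W :=
  timelike_K₂_zero_iff_planar_general γ U₁ U₂ U₃ U₄ K₁ K₂ hγ hU₁ hU₂ hindep hK₁c hγ' hU₁' hU₂'
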